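/- arXiv:1606.01973 — 2 statements merged into one kernel-verified Lean document; each statement's English description precedes it below -/
import Mathlib

section
/- If a finite simple graph G satisfies G ⇒ T_n for some n ≥ 1, then the box product G □ K_{|G|+1} satisfies (G □ K_{|G|+1}) ⇒ T_{n+1}. -/
/-- An orientation of a simple graph `G`: an asymmetric relation `D` whose
symmetrization is exactly the adjacency relation of `G`. -/
def IsOrientation {V : Type*} (G : SimpleGraph V) (D : V → V → Prop) : Prop :=
  (∀ u v, ¬ (D u v ∧ D v u)) ∧ ∀ u v, G.Adj u v ↔ (D u v ∨ D v u)

/-- A digraph structure on a relation: no loops and no pairs of opposite arcs. -/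
def IsDigraph {W : Type*} (E : W → W → Prop) : Prop :=
  ∀ u v, ¬ (E u v ∧ E v u)

/-- `G ⇒ E`: every orientation `D` of `G` contains an isometric copy of the digraph `E`:
an injective map `f` inducing an isomorphism onto its image, preserving orientations,
such that distances (in the underlying undirected graphs) are preserved. -/
def IsoRamseyArrow {V W : Type*} (G : SimpleGraph V) (E : W → W → Prop) : Prop :=
  ∀ D : V → V → Prop, IsOrientation G D →
    ∃ f : W → V, Function.Injective f ∧
      (∀ u v, E u v ↔ D (f u) (f v)) ∧
      (∀ u v, (SimpleGraph.fromRel E).edist u v = G.edist (f u) (f v))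

/-- An oriented tree: a digraph whose underlying undirected graph is a tree. -/
def IsOrientedTree {W : Type*} (E : W → W → Prop) : Prop :=
  IsDigraph E ∧ (SimpleGraph.fromRel E).IsTree

/-- `G ⇒ 𝒯ₙ` : `G ⇒ T` for every oriented tree `T` on `n` vertices. -/
def IsoRamseyArrowTrees {V : Type*} (G : SimpleGraph V) (n : ℕ) : Prop :=
  ∀ (W : Type) (_ : Fintype W), Fintype.card W = n →
    ∀ E : W → W → Prop, IsOrientedTree E → IsoRamseyArrow G E

/-!
Delete a leaf `x` of the tree, with neighbour `y`. Every fibre `{g} × K` of `G □ K` is a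
tournament on more than `|G|` vertices, so by pigeonhole there is a layer `i` such that every
vertex `(g, i)` has a fibre neighbour `(g, j)` joined to it by an arc oriented like the edge
between `y` and `x`. Embed the tree minus `x` isometrically into the layer `G × {i}` (distances
in a box product add up), and send `x` to that fibre neighbour of the image of `y`: distances
from the leaf `x` are those from `y` plus one, and deleting a leaf does not change the
distances between the other vertices.
-/

namespace SimpleGraph

variable {V W : Type*} {G : SimpleGraph V} {G' : SimpleGraph W}

theorem Hom.edist_map_le (f : G →g G') (u v : V) : G'.edist (f u) (f v) ≤ G.edist u v := by
  by_cases hr : G.Reachable u v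
  · obtain ⟨p, hp⟩ := hr.exists_walk_length_eq_edist
    rw [← hp, ← p.length_map f]
    exact edist_le _
  · exact edist_eq_top_of_not_reachable hr ▸ le_top

theorem edist_induce_of_subsingleton_neighborSet {s : Set V}
    (hs : ∀ v ∉ s, (G.neighborSet v).Subsingleton) (u v : s) :
    (G.induce s).edist u v = G.edist u v := by
  refine le_antisymm ?_ ((Embedding.induce s).toHom.edist_map_le u v)
  by_cases hr : G.Reachable u v
  · obtain ⟨p, hp, hlen⟩ := hr.exists_path_of_dist
    have hps : ∀ w ∈ p.support, w ∈ s := fun w hw => by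
      by_contra hws
      exact hp.isTrail.not_mem_support_of_subsingleton_neighborSet
        (by grind) (by grind) (hs w hws) hw
    have hlen' : (p.induce s hps).length = p.length := by
      rw [← Walk.length_map (Embedding.induce s).toHom, Walk.map_induce]; rfl
    calc (G.induce s).edist u v ≤ (p.induce s hps).length := edist_le _
      _ = G.edist u v := by rw [hlen', hlen, hr.coe_dist_eq_edist]
  · exact edist_eq_top_of_not_reachable hr ▸ le_top

theorem adj_of_neighborSet_eq_singleton {x y : V} (hx : G.neighborSet x = {y}) : G.Adj x y := by
  simp [← mem_neighborSet, hx]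

theorem edist_induce_compl_singleton {x y : V} (hx : G.neighborSet x = {y})
    (u v : ({x}ᶜ : Set V)) : (G.induce {x}ᶜ).edist u v = G.edist u v :=
  edist_induce_of_subsingleton_neighborSet (fun v hv => by
    obtain rfl : v = x := by simpa using hv
    simp [hx]) u v

theorem edist_eq_edist_add_one_of_neighborSet_eq_singleton {x y u : V}
    (hx : G.neighborSet x = {y}) (hu : u ≠ x) : G.edist x u = G.edist y u + 1 := by
  refine le_antisymm ?_ ?_
  · calc G.edist x u ≤ G.edist x y + G.edist y u := G.edist_triangle
      _ = G.edist y u + 1 := by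
        rw [edist_eq_one_iff_adj.mpr (adj_of_neighborSet_eq_singleton hx), add_comm]
  · rw [edist_eq_sInf (u := x)]
    refine le_sInf ?_
    rintro _ ⟨p, rfl⟩
    obtain ⟨w, hw, q, rfl⟩ := Walk.exists_eq_cons_of_ne hu.symm p
    obtain rfl : w = y := by simpa [← mem_neighborSet, hx] using hw
    simp only [Walk.length_cons, Nat.cast_succ]
    gcongr
    exact edist_le q

theorem IsTree.exists_neighborSet_eq_singleton [Finite V] [Nontrivial V] (hT : G.IsTree) :
    ∃ x y, G.neighborSet x = {y} := by
  classical
  have := Fintype.ofFinite V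
  obtain ⟨x, hx⟩ := hT.exists_vert_degree_one_of_nontrivial
  obtain ⟨y, hy, huniq⟩ := degree_eq_one_iff_existsUnique_adj.mp hx
  exact ⟨x, y, Set.eq_singleton_iff_unique_mem.mpr ⟨hy, huniq⟩⟩

theorem IsTree.induce_compl_singleton {x y : V} (hT : G.IsTree) (hx : G.neighborSet x = {y}) :
    (G.induce {x}ᶜ).IsTree := by
  refine ⟨(connected_iff _).mpr ⟨hT.connected.preconnected.induce_of_degree_eq_one ?_,
    ⟨⟨y, (adj_of_neighborSet_eq_singleton hx).ne.symm⟩⟩⟩, hT.isAcyclic.induce _⟩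
  intro v hv
  obtain rfl : v = x := by simpa using hv
  simp [hx]

theorem fromRel_induce (E : V → V → Prop) (s : Set V) :
    (fromRel E).induce s = fromRel fun a b : s => E a b := by
  ext a b
  simp [Subtype.ext_iff]

end SimpleGraph

open SimpleGraph

theorem exists_forall_exists_ne_of_card_lt {κ ι : Type*} [Fintype κ] [Fintype ι]
    (hcard : Fintype.card κ < Fintype.card ι) (R : κ → ι → ι → Prop)
    (htotal : ∀ g i j, i ≠ j → R g i j ∨ R g j i) : ∃ i, ∀ g, ∃ j ≠ i, R g i j := by
  by_contra! h
  choose c hc using h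
  have hinj : Function.Injective c := by
    intro i j hij
    by_contra hne
    rcases htotal (c i) i j hne with hR | hR
    · exact hc i j (Ne.symm hne) hR
    · exact hc j i hne (hij ▸ hR)
  exact (Fintype.card_le_of_injective c hinj).not_gt hcard

theorem IsOrientation.boxProd_layer {V ι : Type*} {G : SimpleGraph V} {K : SimpleGraph ι}
    {D : V × ι → V × ι → Prop} (hD : IsOrientation (G □ K) D) (i : ι) :
    IsOrientation G fun a b => D (a, i) (b, i) :=
  ⟨fun _ _ => hD.1 _ _, fun a b => by rw [← hD.2]; simp⟩

/-- An isometry is injective and preserves adjacency, so it reflects arcs once it preserves them. -/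
theorem isoRamseyArrow_of_forall_exists_isometry {V W : Type*} {G : SimpleGraph V}
    {E : W → W → Prop}
    (h : ∀ D, IsOrientation G D → ∃ f : W → V, (∀ u v, E u v → D (f u) (f v)) ∧
      ∀ u v, (fromRel E).edist u v = G.edist (f u) (f v)) :
    IsoRamseyArrow G E := by
  intro D hD
  obtain ⟨f, hfE, hfd⟩ := h D hD
  refine ⟨f, fun u v huv => ?_, fun u v => ⟨hfE u v, fun hD' => ?_⟩, hfd⟩
  · rwa [← edist_eq_zero_iff, hfd, edist_eq_zero_iff]
  · have hadj : (fromRel E).Adj u v := by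
      rw [← edist_eq_one_iff_adj, hfd, edist_eq_one_iff_adj, hD.2]
      exact Or.inl hD'
    exact ((fromRel_adj E u v).mp hadj).2.resolve_right fun hvu => hD.1 _ _ ⟨hD', hfE v u hvu⟩

section LeafExtension

variable {V W ι : Type*} [DecidableEq W]

def extendLeaf (x : W) (f : ({x}ᶜ : Set W) → V) (i : ι) (p : V × ι) : W → V × ι :=
  fun u => if h : u = x then p else (f ⟨u, h⟩, i)

@[simp]
theorem extendLeaf_self (x : W) (f : ({x}ᶜ : Set W) → V) (i : ι) (p : V × ι) :
    extendLeaf x f i p x = p :=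
  dif_pos rfl

theorem extendLeaf_of_ne {x u : W} (f : ({x}ᶜ : Set W) → V) (i : ι) (p : V × ι) (hu : u ≠ x) :
    extendLeaf x f i p u = (f ⟨u, hu⟩, i) :=
  dif_neg hu

theorem edist_extendLeaf {T : SimpleGraph W} {G : SimpleGraph V} {x : W} {y : ({x}ᶜ : Set W)}
    (hx : T.neighborSet x = {↑y}) {f : ({x}ᶜ : Set W) → V}
    (hf : ∀ a b, (T.induce {x}ᶜ).edist a b = G.edist (f a) (f b)) {i j : ι} (hji : j ≠ i)
    (u v : W) :
    T.edist u v = (G □ (⊤ : SimpleGraph ι)).edist (extendLeaf x f i (f y, j) u)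
      (extendLeaf x f i (f y, j) v) := by
  have hleaf : ∀ v, T.edist x v = (G □ (⊤ : SimpleGraph ι)).edist (extendLeaf x f i (f y, j) x)
      (extendLeaf x f i (f y, j) v) := by
    intro v
    by_cases hv : v = x
    · subst hv
      simp only [edist_self]
    · rw [edist_eq_edist_add_one_of_neighborSet_eq_singleton hx hv, extendLeaf_self,
        extendLeaf_of_ne _ _ _ hv, edist_boxProd, edist_top_of_ne hji, ← hf,
        edist_induce_compl_singleton hx y ⟨v, hv⟩]
  by_cases hu : u = x
  · subst hu
    exact hleaf v
  by_cases hv : v = x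
  · subst hv
    rw [edist_comm, hleaf u, edist_comm]
  rw [extendLeaf_of_ne _ _ _ hu, extendLeaf_of_ne _ _ _ hv, edist_boxProd, edist_self, add_zero,
    ← hf, edist_induce_compl_singleton hx ⟨u, hu⟩ ⟨v, hv⟩]

end LeafExtension

theorem isoRamseyArrow_boxProd_top_of_leaf {V W ι : Type*} [Fintype V] [Fintype ι]
    (hcard : Fintype.card V < Fintype.card ι) {G : SimpleGraph V} {E : W → W → Prop}
    (hE : IsDigraph E) {x : W} {y : ({x}ᶜ : Set W)} (hx : (fromRel E).neighborSet x = {↑y})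
    (hsub : IsoRamseyArrow G fun a b : ({x}ᶜ : Set W) => E a b) :
    IsoRamseyArrow (G □ (⊤ : SimpleGraph ι)) E := by
  classical
  have hnbr : ∀ w, E x w ∨ E w x → w = y := fun w hw => by
    have hxw : x ≠ w := by rintro rfl; exact hE x x (by tauto)
    have hw' : w ∈ (fromRel E).neighborSet x := (fromRel_adj E x w).mpr ⟨hxw, hw⟩
    rwa [hx] at hw'
  refine isoRamseyArrow_of_forall_exists_isometry fun D hD => ?_
  obtain ⟨i, hi⟩ := exists_forall_exists_ne_of_card_lt hcard
    (fun g i j => (E y x → D (g, i) (g, j)) ∧ (E x y → D (g, j) (g, i))) fun g i j hij => by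
      have hDij := (hD.2 (g, i) (g, j)).mp (by simp [hij])
      have := hE x y
      tauto
  obtain ⟨f, -, hfE, hfd⟩ := hsub _ (hD.boxProd_layer i)
  obtain ⟨j, hji, hyx, hxy⟩ := hi (f y)
  refine ⟨extendLeaf x f i (f y, j), fun u v huv => ?_,
    edist_extendLeaf hx (by rwa [fromRel_induce]) hji⟩
  by_cases hu : u = x
  · subst hu
    obtain rfl := hnbr v (Or.inl huv)
    rw [extendLeaf_self, extendLeaf_of_ne _ _ _ y.2]
    exact hxy huv
  by_cases hv : v = x
  · subst hv
    obtain rfl := hnbr u (Or.inr huv)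
    rw [extendLeaf_self, extendLeaf_of_ne _ _ _ y.2]
    exact hyx huv
  rw [extendLeaf_of_ne _ _ _ hu, extendLeaf_of_ne _ _ _ hv]
  exact (hfE ⟨u, hu⟩ ⟨v, hv⟩).mp huv

theorem stmt3 (n : ℕ) (hn : 1 ≤ n) (V : Type) [Fintype V] (G : SimpleGraph V)
    (hG : IsoRamseyArrowTrees G n) :
    IsoRamseyArrowTrees
      (G.boxProd (⊤ : SimpleGraph (Fin (Fintype.card V + 1)))) (n + 1) := by
  classical
  intro W _ hW E hE
  have : Nontrivial W := Fintype.one_lt_card_iff_nontrivial.mp (by omega)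
  obtain ⟨x, y, hx⟩ := hE.2.exists_neighborSet_eq_singleton
  have hyx : y ∈ ({x}ᶜ : Set W) := (adj_of_neighborSet_eq_singleton hx).ne.symm
  refine isoRamseyArrow_boxProd_top_of_leaf (by simp) hE.1 (y := ⟨y, hyx⟩) hx
    (hG _ inferInstance ?_ _ ⟨fun a b => hE.1 a b, ?_⟩)
  · rw [Fintype.card_compl_set, hW, Fintype.card_unique, Nat.add_sub_cancel]
  · rw [← fromRel_induce]
    exact hE.2.induce_compl_singleton hx
end

section
/- There exists a simple graph G on a countably infinite vertex set such that G ⇒ I_n for every n ≥ 1. -/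
/-- The directed path `I n` on vertex set `Fin n`, with arcs `(i, i+1)`. -/
def dirPath (n : ℕ) : Fin n → Fin n → Prop :=
  fun i j => (i : ℕ) + 1 = (j : ℕ)

/-!
Take for `G` the de Bruijn graph on words over `ℕ` of all lengths (encoded in `ℕ`), in which `a`
and `b` are joined when they are the initial and the final segment of one longer word. Given an
orientation, colour each word `l` of length `n + 1` by the direction of the arc between
`l.dropLast` and `l.tail`. By the infinite Ramsey theorem there is an increasing `g` whose windows
of length `n + 1` all get one colour, so the windows `w t` of length `n` of `g` form a directed
path, in one direction or the other. The path is induced because windows of length at least two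
are adjacent only when consecutive, and isometric because the number of letters of a word missing
from `w b` changes by at most one along an edge, which puts `w a` at distance at least `|a - b|`
from `w b`.
-/

open SimpleGraph

section Ramsey

variable {κ : Type*} [Finite κ]

theorem exists_infinite_subset_forall_eq (r : ℕ) (C : List ℕ → κ) {S : Set ℕ}
    (hS : S.Infinite) : ∃ T ⊆ S, T.Infinite ∧ ∃ c, ∀ l : List ℕ, l.length = r →
      l.Pairwise (· < ·) → (∀ x ∈ l, x ∈ T) → C l = c := by
  induction r generalizing S C with
  | zero =>
    refine ⟨S, subset_rfl, hS, C [], fun l hl _ _ => ?_⟩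
    rw [List.length_eq_zero_iff.mp hl]
  | succ r ih =>
    have step : ∀ S' : {S' : Set ℕ // S'.Infinite}, ∃ T' : {T' : Set ℕ // T'.Infinite},
        T'.1 ⊆ S'.1 \ Set.Iic (sInf S'.1) ∧ ∃ c, ∀ l : List ℕ, l.length = r →
          l.Pairwise (· < ·) → (∀ x ∈ l, x ∈ T'.1) → C (sInf S'.1 :: l) = c := fun S' => by
      obtain ⟨T', hT'S, hT', c, hc⟩ :=
        ih (fun l => C (sInf S'.1 :: l)) (S'.2.sdiff (Set.finite_Iic _))
      exact ⟨⟨T', hT'⟩, hT'S, c, hc⟩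
    choose next hnext c hc using step
    let Sseq : ℕ → {S' : Set ℕ // S'.Infinite} := fun i => next^[i] ⟨S, hS⟩
    have hSseq_succ : ∀ i, Sseq (i + 1) = next (Sseq i) :=
      fun i => Function.iterate_succ_apply' _ _ _
    let a : ℕ → ℕ := fun i => sInf (Sseq i).1
    have ha_mem : ∀ i, a i ∈ (Sseq i).1 := fun i => Nat.sInf_mem (Sseq i).2.nonempty
    have hsucc : ∀ i, (Sseq (i + 1)).1 ⊆ (Sseq i).1 \ Set.Iic (a i) := fun i => by
      rw [hSseq_succ]; exact hnext _
    have hanti : Antitone fun i => (Sseq i).1 :=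
      antitone_nat_of_succ_le fun i => (hsucc i).trans Set.sdiff_subset
    have ha : StrictMono a := strictMono_nat_of_lt_succ fun i => by
      simpa using (hsucc i (ha_mem (i + 1))).2
    -- pigeonhole on the colours `c (Sseq i)` attached to the elements `a i`
    obtain ⟨c₀, hc₀⟩ := Finite.exists_infinite_fiber fun i => c (Sseq i)
    refine ⟨a '' ((fun i => c (Sseq i)) ⁻¹' {c₀}), ?_,
      (Set.infinite_coe_iff.mp hc₀).image ha.injective.injOn, c₀, ?_⟩
    · rintro _ ⟨i, -, rfl⟩
      exact hanti (Nat.zero_le i) (ha_mem i)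
    · rintro (_ | ⟨x, l⟩) hlen hl hmem
      · simp at hlen
      obtain ⟨i, hi, rfl⟩ := hmem x List.mem_cons_self
      rw [← hi]
      refine hc (Sseq i) l (by simpa using hlen) (List.pairwise_cons.mp hl).2 fun y hy => ?_
      obtain ⟨j, -, rfl⟩ := hmem y (List.mem_cons_of_mem _ hy)
      have hij : i < j := ha.lt_iff_lt.mp ((List.pairwise_cons.mp hl).1 _ hy)
      rw [← hSseq_succ]
      exact hanti hij (ha_mem j)

theorem exists_strictMono_forall_eq (r : ℕ) (C : List ℕ → κ) :
    ∃ g : ℕ → ℕ, StrictMono g ∧ ∃ c, ∀ l : List ℕ, l.length = r →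
      l.Pairwise (· < ·) → C (l.map g) = c := by
  obtain ⟨T, -, hT, c, hc⟩ := exists_infinite_subset_forall_eq r C Set.infinite_univ
  have hg := Nat.nth_strictMono hT
  refine ⟨Nat.nth (· ∈ T), hg, c, fun l hlen hl => hc _ (by simpa using hlen) ?_ ?_⟩
  · exact List.pairwise_map.mpr (hl.imp fun h => hg h)
  · simpa using fun x _ => Nat.nth_mem_of_infinite (p := (· ∈ T)) hT x

end Ramsey

namespace SimpleGraph

variable {V W : Type*} {G : SimpleGraph V} {G' : SimpleGraph W}

theorem Hom.edist_le (φ : G →g G') (u v : V) : G'.edist (φ u) (φ v) ≤ G.edist u v :=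
  le_iInf fun p => (SimpleGraph.edist_le (p.map φ)).trans_eq (by rw [Walk.length_map])

theorem Iso.edist_apply (e : G ≃g G') (u v : V) : G'.edist (e u) (e v) = G.edist u v :=
  le_antisymm (e.toHom.edist_le u v) (by simpa using e.symm.toHom.edist_le (e u) (e v))

section Lipschitz

variable {μ : V → ℕ} (hμ : ∀ x y, G.Adj x y → μ x ≤ μ y + 1)
include hμ

theorem Walk.apply_le_length_add {u v : V} (p : G.Walk u v) : μ u ≤ p.length + μ v := by
  induction p with
  | nil => simp
  | cons hadj _ ih =>
    rw [Walk.length_cons]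
    have := hμ _ _ hadj
    omega

theorem apply_le_edist_add (u v : V) : (μ u : ℕ∞) ≤ G.edist u v + μ v := by
  rcases eq_or_ne (G.edist u v) ⊤ with h | h
  · simp [h]
  · obtain ⟨p, hp⟩ := exists_walk_of_edist_ne_top h
    rw [← hp]
    exact_mod_cast p.apply_le_length_add hμ

end Lipschitz

theorem pathGraph_edist {n : ℕ} (u v : Fin n) : (pathGraph n).edist u v = Nat.dist u v := by
  refine le_antisymm ?_ ?_
  · wlog huv : (u : ℕ) ≤ v generalizing u v
    · rw [edist_comm, Nat.dist_comm]
      exact this v u (by omega)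
    obtain ⟨d, hd⟩ := Nat.exists_eq_add_of_le huv
    rw [Nat.dist_eq_sub_of_le huv, hd, Nat.add_sub_cancel_left]
    induction d generalizing v with
    | zero => simp [show u = v from Fin.ext hd.symm]
    | succ d ih =>
      let v' : Fin n := ⟨u + d, by omega⟩
      have hadj : (pathGraph n).Adj v' v := pathGraph_adj.mpr (Or.inl (by simp [v']; omega))
      calc (pathGraph n).edist u v ≤ (pathGraph n).edist u v' + (pathGraph n).edist v' v :=
            SimpleGraph.edist_triangle
        _ ≤ d + 1 := add_le_add (ih v' (by simp [v']) rfl) (edist_eq_one_iff_adj.mpr hadj).le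
        _ = (d + 1 : ℕ) := by push_cast; rfl
  · have hμ : ∀ x y : Fin n, (pathGraph n).Adj x y → Nat.dist x v ≤ Nat.dist y v + 1 := by
      intro x y h
      rw [pathGraph_adj] at h
      unfold Nat.dist
      omega
    simpa using apply_le_edist_add hμ u v

end SimpleGraph

section Orientation

variable {V : Type*} {G : SimpleGraph V} {D : V → V → Prop}

theorem IsOrientation.adj (hD : IsOrientation G D) {u v : V} (h : D u v) : G.Adj u v :=
  (hD.2 u v).mpr (Or.inl h)

theorem IsOrientation.flip (hD : IsOrientation G D) : IsOrientation G (flip D) :=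
  ⟨fun u v h => hD.1 u v h.symm, fun u v => (hD.2 u v).trans or_comm⟩

theorem IsOrientation.apply_iff_of_forall_apply_succ (hD : IsOrientation G D) {w : ℕ → V}
    (hw : ∀ t, D (w t) (w (t + 1))) {a b : ℕ}
    (hab : G.Adj (w a) (w b) → a + 1 = b ∨ b + 1 = a) : D (w a) (w b) ↔ a + 1 = b := by
  refine ⟨fun h => (hab (hD.adj h)).resolve_right ?_, fun h => h ▸ hw a⟩
  rintro rfl
  exact hD.1 _ _ ⟨h, hw b⟩

theorem fromRel_dirPath (n : ℕ) : SimpleGraph.fromRel (dirPath n) = pathGraph n := by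
  ext u v
  simp only [fromRel_adj, pathGraph_adj, dirPath, ne_eq, Fin.ext_iff]
  omega

theorem IsOrientation.exists_isometric_dirPath (hD : IsOrientation G D) {n : ℕ} {f : Fin n → V}
    (harc : ∀ i j, D (f i) (f j) ↔ dirPath n i j)
    (hdist : ∀ i j : Fin n, (Nat.dist i j : ℕ∞) ≤ G.edist (f i) (f j)) :
    ∃ f : Fin n → V, Function.Injective f ∧ (∀ u v, dirPath n u v ↔ D (f u) (f v)) ∧
      ∀ u v, (SimpleGraph.fromRel (dirPath n)).edist u v = G.edist (f u) (f v) := by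
  let φ : pathGraph n →g G := ⟨f, fun {u v} h => by
    rcases pathGraph_adj.mp h with h | h
    · exact hD.adj ((harc u v).mpr h)
    · exact (hD.adj ((harc v u).mpr h)).symm⟩
  refine ⟨f, fun i j hij => ?_, fun u v => (harc u v).symm, fun u v => ?_⟩
  · have := hdist i j
    rw [hij, edist_self, nonpos_iff_eq_zero, Nat.cast_eq_zero] at this
    exact Fin.ext (Nat.eq_of_dist_eq_zero this)
  · rw [fromRel_dirPath, pathGraph_edist]
    exact le_antisymm (hdist u v) (pathGraph_edist u v ▸ φ.edist_le u v)

theorem IsoRamseyArrow.of_iso {V' X : Type*} {G' : SimpleGraph V'} {E : X → X → Prop}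
    (e : G ≃g G') (h : IsoRamseyArrow G' E) : IsoRamseyArrow G E := by
  intro D hD
  have hD' : IsOrientation G' fun x y => D (e.symm x) (e.symm y) :=
    ⟨fun x y => hD.1 _ _, fun x y => (e.symm.map_adj_iff).symm.trans (hD.2 _ _)⟩
  obtain ⟨f, hf, harc, hdist⟩ := h _ hD'
  exact ⟨e.symm ∘ f, e.symm.injective.comp hf, harc,
    fun u v => (hdist u v).trans (e.symm.edist_apply _ _).symm⟩

end Orientation

/-- Words of all lengths over `α`, each length forming an ordinary de Bruijn graph. -/
def deBruijnGraph (α : Type*) : SimpleGraph (List α) :=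
  SimpleGraph.fromRel fun a b => ∃ l : List α, l.dropLast = a ∧ l.tail = b

namespace deBruijnGraph

variable {α : Type*}

theorem card_toFinset_sdiff_le_one [DecidableEq α] {a b : List α}
    (h : (deBruijnGraph α).Adj a b) : (a.toFinset \ b.toFinset).card ≤ 1 := by
  rw [Finset.card_le_one]
  rcases h.2 with ⟨l, rfl, rfl⟩ | ⟨l, rfl, rfl⟩
  · cases l with
    | nil => simp
    | cons x l =>
      have : ∀ y ∈ (x :: l).dropLast.toFinset \ l.toFinset, y = x := by
        simp only [Finset.mem_sdiff, List.mem_toFinset, and_imp]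
        intro y hy hyl
        simpa [hyl] using List.dropLast_subset _ hy
      exact fun y hy z hz => (this y hy).trans (this z hz).symm
  · induction l using List.reverseRecOn with
    | nil => simp
    | append_singleton l x =>
      have : ∀ y ∈ (l ++ [x]).tail.toFinset \ (l ++ [x]).dropLast.toFinset, y = x := by
        simp only [List.dropLast_concat, Finset.mem_sdiff, List.mem_toFinset, and_imp]
        intro y hy hyl
        simpa [hyl] using List.tail_subset _ hy
      exact fun y hy z hz => (this y hy).trans (this z hz).symm

theorem card_toFinset_sdiff_le_add_one [DecidableEq α] (T : Finset α) {a b : List α}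
    (h : (deBruijnGraph α).Adj a b) :
    (a.toFinset \ T).card ≤ (b.toFinset \ T).card + 1 :=
  calc (a.toFinset \ T).card ≤ (a.toFinset \ b.toFinset ∪ b.toFinset \ T).card :=
        Finset.card_le_card (sdiff_triangle _ _ _)
    _ ≤ (b.toFinset \ T).card + 1 := by
        have := card_toFinset_sdiff_le_one h
        have := Finset.card_union_le (a.toFinset \ b.toFinset) (b.toFinset \ T)
        omega

def window (g : ℕ → α) (t n : ℕ) : List α := (List.range' t n).map g

variable {g : ℕ → α}

theorem window_succ_dropLast (t n : ℕ) : (window g t (n + 1)).dropLast = window g t n := by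
  simp [window, List.range'_concat]

theorem window_succ_tail (t n : ℕ) : (window g t (n + 1)).tail = window g (t + 1) n := by
  simp [window, List.range'_succ]

theorem head?_window_succ (t n : ℕ) : (window g t (n + 1)).head? = some (g t) := by
  simp [window, List.range'_succ]

theorem adj_window_succ (hg : g.Injective) (t : ℕ) {n : ℕ} (hn : 0 < n) :
    (deBruijnGraph α).Adj (window g t n) (window g (t + 1) n) := by
  refine ⟨fun h => ?_, Or.inl ⟨window g t (n + 1), window_succ_dropLast _ _,
    window_succ_tail _ _⟩⟩
  obtain ⟨m, rfl⟩ := Nat.exists_eq_add_one_of_ne_zero hn.ne'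
  have := congrArg List.head? h
  rw [head?_window_succ, head?_window_succ, Option.some.injEq] at this
  exact absurd (hg this) (by omega)

/-- Windows of length at least two are adjacent only when they are consecutive, since a
shift matches the second letter of one window with the first letter of the other. -/
theorem succ_eq_or_succ_eq_of_adj_window (hg : g.Injective) {a b n : ℕ} (hn : 2 ≤ n)
    (h : (deBruijnGraph α).Adj (window g a n) (window g b n)) : a + 1 = b ∨ b + 1 = a := by
  obtain ⟨m, rfl⟩ := Nat.exists_eq_add_of_le' hn
  have key : ∀ a b, (∃ l : List α, l.dropLast = window g a (m + 2) ∧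
      l.tail = window g b (m + 2)) → a + 1 = b := by
    rintro a b ⟨l, ha, hb⟩
    have := congrArg List.head? (List.tail_dropLast (l := l))
    rw [ha, hb, window_succ_tail, window_succ_dropLast, head?_window_succ, head?_window_succ,
      Option.some.injEq] at this
    exact hg this
  exact h.2.imp (key a b) (key b a)

theorem dist_le_edist_window (hg : g.Injective) {a b n : ℕ} (h : Nat.dist a b ≤ n) :
    (Nat.dist a b : ℕ∞) ≤ (deBruijnGraph α).edist (window g a n) (window g b n) := by
  classical
  wlog hab : a ≤ b generalizing a b
  · rw [Nat.dist_comm, edist_comm]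
    exact this (by rwa [Nat.dist_comm]) (by omega)
  rw [Nat.dist_eq_sub_of_le hab] at h ⊢
  -- count the letters of a word that are missing from the window at `b`
  let T := (window g b n).toFinset
  have hsub : (Finset.Ico a b).image g ⊆ (window g a n).toFinset \ T := by
    intro x hx
    simp only [Finset.mem_image, Finset.mem_Ico] at hx
    obtain ⟨i, hi, rfl⟩ := hx
    simp only [T, window, Finset.mem_sdiff, List.mem_toFinset, List.mem_map, List.mem_range'_1,
      hg.eq_iff, exists_eq_right]
    omega
  have hcard := Finset.card_le_card hsub
  rw [Finset.card_image_of_injective _ hg, Nat.card_Ico] at hcard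
  calc ((b - a : ℕ) : ℕ∞) ≤ ((window g a n).toFinset \ T).card := by exact_mod_cast hcard
    _ ≤ (deBruijnGraph α).edist (window g a n) (window g b n) + (T \ T).card :=
        apply_le_edist_add (fun _ _ => card_toFinset_sdiff_le_add_one T) _ _
    _ = _ := by simp

end deBruijnGraph

open deBruijnGraph in
theorem deBruijnGraph_isoRamseyArrow_dirPath {n : ℕ} (hn : 1 ≤ n) :
    IsoRamseyArrow (deBruijnGraph ℕ) (dirPath n) := by
  intro D hD
  obtain ⟨g, hg, c, hc⟩ :=
    exists_strictMono_forall_eq (n + 1) fun l => D l.dropLast l.tail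
  let w : ℕ → List ℕ := fun t => window g t n
  have hcol : ∀ t, D (w t) (w (t + 1)) = c := fun t => by
    have : D (window g t (n + 1)).dropLast (window g t (n + 1)).tail = c :=
      hc (List.range' t (n + 1)) (by simp) List.pairwise_lt_range'
    rwa [window_succ_dropLast, window_succ_tail] at this
  have hadj : ∀ a b, (deBruijnGraph ℕ).Adj (w a) (w b) → a < n → b < n →
      a + 1 = b ∨ b + 1 = a := fun a b h ha hb => by
    have hab : a ≠ b := fun hab => h.ne (hab ▸ rfl)
    exact succ_eq_or_succ_eq_of_adj_window hg.injective (by omega) h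
  by_cases hfwd : c
  · refine hD.exists_isometric_dirPath (f := fun i => w i) (fun i j => ?_) fun i j => ?_
    · exact hD.apply_iff_of_forall_apply_succ (fun t => hcol t ▸ hfwd)
        fun h => hadj _ _ h i.2 j.2
    · exact dist_le_edist_window hg.injective (by unfold Nat.dist; omega)
  · -- all arcs point backwards along the windows, so read them in reverse order
    have hback : ∀ t, D (w (t + 1)) (w t) := fun t =>
      ((hD.2 _ _).mp (adj_window_succ hg.injective t hn)).resolve_left (hcol t ▸ hfwd)
    refine hD.exists_isometric_dirPath (f := fun i => w (n - 1 - i)) (fun i j => ?_) fun i j => ?_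
    · refine (hD.flip.apply_iff_of_forall_apply_succ hback (a := n - 1 - j) (b := n - 1 - i)
        fun h => hadj _ _ h (by omega) (by omega)).trans ?_
      simp only [dirPath]
      omega
    · rw [show Nat.dist i j = Nat.dist (n - 1 - i) (n - 1 - j) by unfold Nat.dist; omega]
      exact dist_le_edist_window hg.injective (by unfold Nat.dist; omega)

theorem stmt17 :
    ∃ G : SimpleGraph ℕ, ∀ n : ℕ, 1 ≤ n → IsoRamseyArrow G (dirPath n) :=
  ⟨_, fun _ hn => (deBruijnGraph_isoRamseyArrow_dirPath hn).of_iso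
    (Iso.map (Denumerable.eqv (List ℕ)) _).symm⟩
end
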